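/- arXiv:1407.6126 — 2 statements merged into one kernel-verified Lean document; each statement's English description precedes it below -/
import Mathlib

section
/- Let e0,...,e3,f0,...,f3 be real numbers satisfying the Study condition e0*f0+e1*f1+e2*f2+e3*f3 = 0. Define n0 := f0^2+f1^2+f2^2+f3^2, x0 := 2(e0^2+e1^2+e2^2+e3^2), y1 := 4(e0*f1-e1*f0+e2*f3-e3*f2), y2 := 4(e0*f2-e1*f3-e2*f0+e3*f1), y3 := 4(e0*f3+e1*f2-e2*f1-e3*f0). Then y1^2+y2^2+y3^2 = 8*x0*n0. -/
theorem stmt_1 (e0 e1 e2 e3 f0 f1 f2 f3 : ℝ)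
    (hStudy : e0*f0 + e1*f1 + e2*f2 + e3*f3 = 0)
    (n0 x0 y1 y2 y3 : ℝ)
    (hn0 : n0 = f0^2+f1^2+f2^2+f3^2)
    (hx0 : x0 = 2*(e0^2+e1^2+e2^2+e3^2))
    (hy1 : y1 = 4*(e0*f1-e1*f0+e2*f3-e3*f2))
    (hy2 : y2 = 4*(e0*f2-e1*f3-e2*f0+e3*f1))
    (hy3 : y3 = 4*(e0*f3+e1*f2-e2*f1-e3*f0)) :
    y1^2 + y2^2 + y3^2 = 8*x0*n0 := by
  subst hn0 hx0 hy1 hy2 hy3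
  nlinarith [sq_nonneg (e0*f0 + e1*f1 + e2*f2 + e3*f3), hStudy, sq_nonneg (e0+e1), mul_self_nonneg (e0*f0+e1*f1+e2*f2+e3*f3)]
end

section
/- Let e0,...,e3,f0,...,f3 be real numbers and let c,s be real numbers with c^2+s^2=1. Define the quaternion products e' := e*q and f' := f*q where q = (c,s,0,0) (i.e. e'0 = e0*c - e1*s, e'1 = e0*s + e1*c, e'2 = e2*c + e3*s, e'3 = e3*c - e2*s, and analogously for f'). Then all nine quantities n0 = f0^2+f1^2+f2^2+f3^2, x0 = 2(e0^2+e1^2+e2^2+e3^2), x1 = 2(-e0^2-e1^2+e2^2+e3^2), x2 = -4(e0*e3+e1*e2), x3 = 4(e0*e2-e1*e3), y0 = 4(-e0*f1+e1*f0+e2*f3-e3*f2), y1 = 4(e0*f1-e1*f0+e2*f3-e3*f2), y2 = 4(e0*f2-e1*f3-e2*f0+e3*f1), y3 = 4(e0*f3+e1*f2-e2*f1-e3*f0) are unchanged when (e,f) is replaced by (e',f'). -/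
/-- The nine homogeneous motion parameters of the kinematic mapping for
pentapods with linear platform, as functions of the Study parameters. -/
noncomputable def kinParams (e0 e1 e2 e3 f0 f1 f2 f3 : ℝ) : Fin 9 → ℝ :=
  ![f0^2+f1^2+f2^2+f3^2,
    2*(e0^2+e1^2+e2^2+e3^2),
    2*(-e0^2-e1^2+e2^2+e3^2),
    -4*(e0*e3+e1*e2),
    4*(e0*e2-e1*e3),
    4*(-e0*f1+e1*f0+e2*f3-e3*f2),
    4*(e0*f1-e1*f0+e2*f3-e3*f2),
    4*(e0*f2-e1*f3-e2*f0+e3*f1),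
    4*(e0*f3+e1*f2-e2*f1-e3*f0)]

theorem stmt_3 (e0 e1 e2 e3 f0 f1 f2 f3 c s : ℝ) (hcs : c^2 + s^2 = 1) :
    kinParams (e0*c - e1*s) (e0*s + e1*c) (e2*c + e3*s) (e3*c - e2*s)
              (f0*c - f1*s) (f0*s + f1*c) (f2*c + f3*s) (f3*c - f2*s)
      = kinParams e0 e1 e2 e3 f0 f1 f2 f3 := by
  funext i
  fin_cases i
  · show (f0*c - f1*s)^2+(f0*s + f1*c)^2+(f2*c + f3*s)^2+(f3*c - f2*s)^2 = f0^2+f1^2+f2^2+f3^2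
    linear_combination (f0^2+f1^2+f2^2+f3^2)*hcs
  · show 2*((e0*c - e1*s)^2+(e0*s + e1*c)^2+(e2*c + e3*s)^2+(e3*c - e2*s)^2) = 2*(e0^2+e1^2+e2^2+e3^2)
    linear_combination (2*(e0^2+e1^2+e2^2+e3^2))*hcs
  · show 2*(-(e0*c - e1*s)^2-(e0*s + e1*c)^2+(e2*c + e3*s)^2+(e3*c - e2*s)^2) = 2*(-e0^2-e1^2+e2^2+e3^2)
    linear_combination (2*(-e0^2-e1^2+e2^2+e3^2))*hcs
  · show -4*((e0*c - e1*s)*(e3*c - e2*s)+(e0*s + e1*c)*(e2*c + e3*s)) = -4*(e0*e3+e1*e2)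
    linear_combination (-4*(e0*e3+e1*e2))*hcs
  · show 4*((e0*c - e1*s)*(e2*c + e3*s)-(e0*s + e1*c)*(e3*c - e2*s)) = 4*(e0*e2-e1*e3)
    linear_combination (4*(e0*e2-e1*e3))*hcs
  · show 4*(-(e0*c - e1*s)*(f0*s + f1*c)+(e0*s + e1*c)*(f0*c - f1*s)+(e2*c + e3*s)*(f3*c - f2*s)-(e3*c - e2*s)*(f2*c + f3*s)) = 4*(-e0*f1+e1*f0+e2*f3-e3*f2)
    linear_combination (4*(-e0*f1+e1*f0+e2*f3-e3*f2))*hcs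
  · show 4*((e0*c - e1*s)*(f0*s + f1*c)-(e0*s + e1*c)*(f0*c - f1*s)+(e2*c + e3*s)*(f3*c - f2*s)-(e3*c - e2*s)*(f2*c + f3*s)) = 4*(e0*f1-e1*f0+e2*f3-e3*f2)
    linear_combination (4*(e0*f1-e1*f0+e2*f3-e3*f2))*hcs
  · show 4*((e0*c - e1*s)*(f2*c + f3*s)-(e0*s + e1*c)*(f3*c - f2*s)-(e2*c + e3*s)*(f0*c - f1*s)+(e3*c - e2*s)*(f0*s + f1*c)) = 4*(e0*f2-e1*f3-e2*f0+e3*f1)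
    linear_combination (4*(e0*f2-e1*f3-e2*f0+e3*f1))*hcs
  · show 4*((e0*c - e1*s)*(f3*c - f2*s)+(e0*s + e1*c)*(f2*c + f3*s)-(e2*c + e3*s)*(f0*s + f1*c)-(e3*c - e2*s)*(f0*c - f1*s)) = 4*(e0*f3+e1*f2-e2*f1-e3*f0)
    linear_combination (4*(e0*f3+e1*f2-e2*f1-e3*f0))*hcs
end
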